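/- arXiv:1007.0326 — 6 statements merged into one kernel-verified Lean document; each statement's English description precedes it below -/
import Mathlib

section
/- Let F/E be a finite Galois extension of fields with abelian Galois group Γ, and let y ∈ F be a normal basis generator of F over E. Define R(y) = Σ_{g∈Γ} Tr_{F/E}(y·g(y))·g ∈ E[Γ]. Then R(y) is a unit of E[Γ]. (In particular, for an extension of finite fields F_{q^n}/F_q with Galois group G̃, if y generates a normal basis then R(y) ∈ F_q[G̃]^×.) -/
/-!
For `R(y) = traceGram E y`, the coefficient of `g` in `x * R(y)` is `Tr(g y · w)` with
`w = Σ_h x_h • h y`, by Galois invariance of the trace. So if `x * R(y) = 0`, then `w` is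
trace-orthogonal to the normal basis, hence `w = 0` by nondegeneracy of the trace form, hence
`x = 0` by linear independence of the normal basis. Thus `R(y)` is right regular, and right
regular elements of the finite-dimensional (hence Artinian) algebra `E[Γ]` are units.
-/

open MonoidAlgebra

section

variable {E F : Type*} [Field E] [Field F] [Algebra E F] [FiniteDimensional E F]

variable (E) in
noncomputable def traceGram (y : F) : MonoidAlgebra E (F ≃ₐ[E] F) :=
  ∑ g : F ≃ₐ[E] F, single g (Algebra.trace E F (y * g y))

theorem traceGram_coeff (y : F) (g : F ≃ₐ[E] F) :
    (traceGram E y).coeff g = Algebra.trace E F (y * g y) := by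
  classical
  simp [traceGram, coeff_sum, coeff_single, Finsupp.single_apply]

theorem coeff_mul_traceGram (y : F) (x : MonoidAlgebra E (F ≃ₐ[E] F)) (g : F ≃ₐ[E] F) :
    (x * traceGram E y).coeff g = Algebra.trace E F (g y * ∑ h, x.coeff h • h y) := by
  rw [coeff_mul_apply_left, Finsupp.sum_fintype _ _ (by simp), Finset.mul_sum, map_sum]
  refine Finset.sum_congr rfl fun h _ => ?_
  rw [traceGram_coeff, mul_smul_comm, map_smul, smul_eq_mul, mul_comm (g y),
    ← Algebra.trace_eq_of_algEquiv h, map_mul, ← AlgEquiv.mul_apply, mul_inv_cancel_left]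

theorem isRightRegular_traceGram [Algebra.IsSeparable E F] {y : F}
    (b : Module.Basis (F ≃ₐ[E] F) E F) (hb : ∀ g, b g = g y) :
    IsRightRegular (traceGram E y) := by
  refine isRightRegular_iff_left_eq_zero_of_mul.mpr fun x hx => ?_
  have hb_eq : ⇑b = fun g => g y := funext hb
  set w := ∑ h, x.coeff h • h y
  have hw_orth : Algebra.traceForm E F w = 0 := b.ext fun g => by
    rw [Algebra.traceForm_apply, mul_comm, hb_eq, ← coeff_mul_traceGram, hx]
    rfl
  have hw : w = 0 := (injective_iff_map_eq_zero _).mp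
    (LinearMap.ker_eq_bot.mp (traceForm_nondegenerate E F).ker_eq_bot) w hw_orth
  ext h
  exact Fintype.linearIndependent_iff.mp (hb_eq ▸ b.linearIndependent) x.coeff hw h

theorem isUnit_traceGram [Algebra.IsSeparable E F] {y : F}
    (b : Module.Basis (F ≃ₐ[E] F) E F) (hb : ∀ g, b g = g y) :
    IsUnit (traceGram E y) :=
  have := IsArtinianRing.of_finite E (MonoidAlgebra E (F ≃ₐ[E] F))
  IsArtinianRing.isUnit_iff_isRightRegular.mpr (isRightRegular_traceGram b hb)

end

theorem stmt_4_general (E F : Type*) [Field E] [Field F] [Algebra E F]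
    [FiniteDimensional E F] [IsGalois E F]
    (y : F) (b : Module.Basis (F ≃ₐ[E] F) E F) (hb : ∀ g : F ≃ₐ[E] F, b g = g y) :
    IsUnit (∑ g : F ≃ₐ[E] F,
      MonoidAlgebra.single g (Algebra.trace E F (y * g y)) :
        MonoidAlgebra E (F ≃ₐ[E] F)) :=
  isUnit_traceGram b hb

/-- Let `F/E` be a finite Galois extension with abelian Galois group `Γ`
and `y` a normal basis generator of `F/E`. Then
`R(y) = Σ_{g∈Γ} Tr_{F/E}(y·g(y))·g` is a unit of the group algebra `E[Γ]`. -/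
theorem stmt_4 (E F : Type*) [Field E] [Field F] [Algebra E F]
    [FiniteDimensional E F] [IsGalois E F]
    (hab : ∀ σ τ : F ≃ₐ[E] F, σ * τ = τ * σ)
    (y : F) (b : Module.Basis (F ≃ₐ[E] F) E F) (hb : ∀ g : F ≃ₐ[E] F, b g = g y) :
    IsUnit (∑ g : F ≃ₐ[E] F,
      MonoidAlgebra.single g (Algebra.trace E F (y * g y)) :
        MonoidAlgebra E (F ≃ₐ[E] F)) :=
  stmt_4_general E F y b hb
end

section
/- Let L/K be a finite abelian weakly ramified extension of p-adic fields of odd degree with Galois group G, and let A_{L/K} be the square root of the inverse different. If x ∈ A_{L/K} generates A_{L/K} as an O_K[G]-module, then R(x) = Σ_{g∈G} Tr_{L/K}(x·g(x))·g is a unit in O_K[G]. Moreover, det(Tr_{L/K}(g(x)·h(x)))_{g,h∈G} is a unit of O_K. -/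
/-!
Since `A * A` is the trace dual of `O_L` and fractional ideals of the Dedekind domain `O_L` are
invertible, `A` is its own dual for the trace form with values in `O_K`. As `A` is the `O_K`-span
of the Galois orbit of `x`, that orbit is a `K`-basis of `L` whose dual basis lies in `A`; hence the
Gram matrix `(Tr(g x * h x))_{g,h}` is invertible over `O_K`, and so is its determinant. The Gram
matrix is invariant under left translation by `G`, and left-invariant matrices `T` correspond
multiplicatively to the elements `∑ g, T 1 g • g` of `O_K[G]` (the regular representation); the
Gram matrix corresponds to `R(x)`.
-/

namespace MonoidAlgebra

variable {R G : Type*} [Group G] [Fintype G]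

noncomputable def ofMatrixRow [Semiring R] (T : Matrix G G R) : MonoidAlgebra R G :=
  ofCoeff (Finsupp.equivFunOnFinite.symm (T 1))

@[simp]
theorem coeff_ofMatrixRow [Semiring R] (T : Matrix G G R) (g : G) :
    (ofMatrixRow T).coeff g = T 1 g := rfl

theorem ofMatrixRow_mul [Semiring R] (T S : Matrix G G R)
    (hS : ∀ u : G, S.submatrix (u * ·) (u * ·) = S) :
    ofMatrixRow T * ofMatrixRow S = ofMatrixRow (T * S) := by
  ext k
  rw [coeff_mul_apply_left, Finsupp.sum_fintype _ _ (by simp), coeff_ofMatrixRow, Matrix.mul_apply]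
  refine Finset.sum_congr rfl fun g _ => ?_
  have hSg := congrFun (congrFun (hS g) 1) (g⁻¹ * k)
  simp only [Matrix.submatrix_apply, mul_one, mul_inv_cancel_left] at hSg
  rw [coeff_ofMatrixRow, coeff_ofMatrixRow, hSg]

theorem ofMatrixRow_one [Semiring R] [DecidableEq G] : ofMatrixRow (1 : Matrix G G R) = 1 := by
  ext g
  simp [Matrix.one_apply, one_def, Finsupp.single_apply]

theorem isUnit_ofMatrixRow [CommRing R] [DecidableEq G] {T : Matrix G G R} (hT : IsUnit T)
    (hinv : ∀ u : G, T.submatrix (u * ·) (u * ·) = T) : IsUnit (ofMatrixRow T) := by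
  have hinv' : ∀ u : G, T⁻¹.submatrix (u * ·) (u * ·) = T⁻¹ := fun u => by
    simpa using (Matrix.inv_submatrix_equiv T (Equiv.mulLeft u) (Equiv.mulLeft u)).symm.trans
      (congrArg _ (hinv u))
  refine ⟨⟨ofMatrixRow T, ofMatrixRow T⁻¹, ?_, ?_⟩, rfl⟩
  · rw [ofMatrixRow_mul _ _ hinv', Matrix.mul_nonsing_inv _ ((Matrix.isUnit_iff_isUnit_det T).1 hT),
      ofMatrixRow_one]
  · rw [ofMatrixRow_mul _ _ hinv, Matrix.nonsing_inv_mul _ ((Matrix.isUnit_iff_isUnit_det T).1 hT),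
      ofMatrixRow_one]

end MonoidAlgebra

theorem Module.Basis.repr_mem_iff_exists_sum {K V ι : Type*} [Semiring K] [AddCommMonoid V]
    [Module K V] [Fintype ι] {S : Type*} [SetLike S K] (b : Module.Basis ι K V) (s : S) (v : V) :
    (∀ i, b.repr v i ∈ s) ↔ ∃ c : ι → K, (∀ i, c i ∈ s) ∧ v = ∑ i, c i • b i := by
  constructor
  · exact fun h => ⟨fun i => b.repr v i, h, (b.sum_repr v).symm⟩
  · rintro ⟨c, hc, rfl⟩
    rwa [b.repr_sum_self]

theorem LinearMap.BilinForm.exists_isUnit_lift_gram_of_selfDual {R K V ι : Type*} [CommRing R]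
    [Field K] [Algebra R K] [AddCommGroup V] [Module K V] [Fintype ι] [DecidableEq ι]
    {B : LinearMap.BilinForm K V} (hB : B.Nondegenerate) (b : Module.Basis ι K V)
    (O : Subalgebra R K)
    (hdual : ∀ v, (∀ i, b.repr v i ∈ O) ↔ ∀ i, B v (b i) ∈ O) :
    ∃ T : Matrix ι ι O, IsUnit T ∧ ∀ i j, (T i j : K) = B (b i) (b j) := by
  have hite (p : Prop) [Decidable p] : (if p then (1 : K) else 0) ∈ O := by
    split_ifs
    exacts [O.one_mem, O.zero_mem]
  have hgram : ∀ i j, B (b i) (b j) ∈ O := fun i =>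
    (hdual (b i)).1 fun j => by simpa [Finsupp.single_apply] using hite (i = j)
  have hcoord : ∀ i j, b.repr (B.dualBasis hB b i) j ∈ O := fun i =>
    (hdual _).2 fun j => by simpa [apply_dualBasis_left] using hite (j = i)
  let T : Matrix ι ι O := .of fun i j => ⟨_, hgram i j⟩
  let S : Matrix ι ι O := .of fun i j => ⟨_, hcoord i j⟩
  have hST : S * T = 1 := by
    ext i k
    have hexpand : ∑ j, b.repr (B.dualBasis hB b i) j * B (b j) (b k) =
        B (B.dualBasis hB b i) (b k) := by
      conv_rhs => rw [← b.sum_repr (B.dualBasis hB b i)]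
      simp only [map_sum, map_smul, LinearMap.sum_apply, LinearMap.smul_apply, smul_eq_mul]
    simp only [Matrix.mul_apply, T, S, Matrix.of_apply, AddSubmonoidClass.coe_finsetSum,
      Subalgebra.coe_mul, hexpand, apply_dualBasis_left, Matrix.one_apply]
    rcases eq_or_ne i k with rfl | hik
    · simp
    · simp [hik, hik.symm]
  exact ⟨T, (Matrix.isUnit_iff_isUnit_det T).2 (Matrix.isUnit_det_of_left_inverse hST),
    fun _ _ => rfl⟩

theorem Submodule.mem_of_forall_mul_mem_mul_self {B L : Type*} [CommRing B] [IsDedekindDomain B]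
    [Field L] [Algebra B L] [IsFractionRing B L] {I : Submodule B L} (hI : I.FG) (hI0 : I ≠ ⊥)
    {z : L} (hz : ∀ a ∈ I, z * a ∈ I * I) : z ∈ I := by
  let J : FractionalIdeal (nonZeroDivisors B) L := ⟨I, FractionalIdeal.isFractional_of_fg hI⟩
  have hJ0 : J ≠ 0 := fun h => hI0 (FractionalIdeal.coeToSubmodule_eq_bot.2 h)
  have hle : FractionalIdeal.spanSingleton (nonZeroDivisors B) z * J ≤ J * J :=
    FractionalIdeal.spanSingleton_mul_le_iff.2 fun a ha => by
      rw [← FractionalIdeal.mem_coe, FractionalIdeal.coe_mul]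
      exact hz a ha
  have hle' := mul_le_mul_left hle J⁻¹
  rw [mul_inv_cancel_right₀ hJ0, mul_inv_cancel_right₀ hJ0] at hle'
  exact FractionalIdeal.spanSingleton_le_iff_mem.1 hle'

section IntegralClosure

variable {R K L : Type*} [CommRing R] [Field K] [Field L] [Algebra R K] [Algebra R L]
  [Algebra K L]

theorem Submodule.span_coe_eq_top_of_ne_bot [IsScalarTower R K L] [Algebra.IsAlgebraic R L]
    [FaithfulSMul R K]
    {A : Submodule (integralClosure R L) L} (hA : A ≠ ⊥) : Submodule.span K (A : Set L) = ⊤ := by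
  obtain ⟨a, haA, ha0⟩ := Submodule.exists_mem_ne_zero_of_ne_bot hA
  refine eq_top_iff.2 fun w _ => ?_
  obtain ⟨d, hd, hint⟩ :=
    (Algebra.IsAlgebraic.isAlgebraic (R := R) (w / a)).exists_integral_multiple
  have hdK : algebraMap R K d ≠ 0 :=
    (map_ne_zero_iff _ (FaithfulSMul.algebraMap_injective R K)).2 hd
  have hmem : d • (w / a) * a ∈ A := A.smul_mem ⟨_, hint⟩ haA
  have hw : w = (algebraMap R K d)⁻¹ • (d • (w / a) * a) := by
    rw [Algebra.smul_def, Algebra.smul_def, IsScalarTower.algebraMap_apply R K L, map_inv₀]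
    have hdL : algebraMap K L (algebraMap R K d) ≠ 0 := (map_ne_zero _).2 hdK
    field_simp
  rw [hw]
  exact Submodule.smul_mem _ _ (Submodule.subset_span hmem)

theorem Submodule.mem_iff_forall_trace_mul_mem [IsDedekindDomain (integralClosure R L)]
    [IsFractionRing (integralClosure R L) L] {A : Submodule (integralClosure R L) L}
    (hA : ∀ z : L, z ∈ A * A ↔
      ∀ y ∈ integralClosure R L, Algebra.trace K L (z * y) ∈ integralClosure R K)
    (hFG : A.FG) (hA0 : A ≠ ⊥) (z : L) :
    z ∈ A ↔ ∀ a ∈ A, Algebra.trace K L (z * a) ∈ integralClosure R K := by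
  refine ⟨fun hz a ha => by simpa using (hA _).1 (Submodule.mul_mem_mul hz ha) 1 (one_mem _),
    fun hz => Submodule.mem_of_forall_mul_mem_mul_self hFG hA0 fun a ha => (hA _).2 fun y hy => ?_⟩
  rw [mul_assoc, mul_comm a]
  exact hz _ (A.smul_mem ⟨y, hy⟩ ha)

end IntegralClosure

section GaloisOrbit

variable {R K L : Type*} [CommRing R] [Field K] [Field L] [Algebra R K] [Algebra K L]
  [FiniteDimensional K L]

/-- `O_K[G] x`, with `O_K` the integral closure of `R` in `K`. -/
def integralGaloisSpan (R K : Type*) {L : Type*} [CommRing R] [Field K] [Field L] [Algebra R K]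
    [Algebra K L] [FiniteDimensional K L] (x : L) : Set L :=
  {z | ∃ c : (L ≃ₐ[K] L) → K, (∀ g, c g ∈ integralClosure R K) ∧ z = ∑ g, c g • g x}

theorem apply_mem_integralGaloisSpan [DecidableEq (L ≃ₐ[K] L)] (x : L) (g : L ≃ₐ[K] L) :
    g x ∈ integralGaloisSpan R K x :=
  ⟨Pi.single g 1, fun h => by rcases eq_or_ne h g with rfl | hh <;> simp [*, one_mem, zero_mem],
    by simp [Pi.single_apply]⟩

theorem integralGaloisSpan_subset_span (x : L) :
    integralGaloisSpan R K x ⊆ Submodule.span K (Set.range fun g : L ≃ₐ[K] L => g x) := by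
  rintro _ ⟨c, -, rfl⟩
  exact Submodule.sum_smul_mem _ _ fun g _ => Submodule.subset_span ⟨g, rfl⟩

variable [Algebra R L] {A : Submodule (integralClosure R L) L} {x : L}

theorem Submodule.fg_of_coe_eq_integralGaloisSpan [IsScalarTower R K L]
    (hgen : (A : Set L) = integralGaloisSpan R K x) : A.FG := by
  classical
  refine Submodule.fg_def.2 ⟨Set.range fun g : L ≃ₐ[K] L => g x, Set.finite_range _,
    le_antisymm (Submodule.span_le.2 ?_) fun z hz => ?_⟩
  · exact Set.range_subset_iff.2 fun g => hgen ▸ apply_mem_integralGaloisSpan x g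
  · obtain ⟨c, hc, rfl⟩ : z ∈ integralGaloisSpan R K x := hgen ▸ hz
    refine Submodule.sum_mem _ fun g _ => ?_
    have hcg : IsIntegral R (algebraMap K L (c g)) := (hc g).map (IsScalarTower.toAlgHom R K L)
    rw [Algebra.smul_def]
    exact Submodule.smul_mem _ (⟨_, hcg⟩ : integralClosure R L) (Submodule.subset_span ⟨g, rfl⟩)

theorem Submodule.ne_bot_of_mul_self_eq_traceDual [IsScalarTower R K L]
    (hA : ∀ z : L, z ∈ A * A ↔
      ∀ y ∈ integralClosure R L, Algebra.trace K L (z * y) ∈ integralClosure R K) :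
    A ≠ ⊥ := by
  rintro rfl
  have hone : (1 : L) ∈ (⊥ * ⊥ : Submodule (integralClosure R L) L) :=
    (hA 1).2 fun y hy => by rw [one_mul]; exact Algebra.isIntegral_trace hy
  simp at hone

theorem exists_isUnit_lift_trace_mul_orbit [IsScalarTower R K L] [IsGalois K L]
    [DecidableEq (L ≃ₐ[K] L)] [IsDedekindDomain (integralClosure R L)]
    [IsFractionRing (integralClosure R L) L] [Algebra.IsAlgebraic R L] [FaithfulSMul R K]
    (hA : ∀ z : L, z ∈ A * A ↔
      ∀ y ∈ integralClosure R L, Algebra.trace K L (z * y) ∈ integralClosure R K)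
    (hgen : (A : Set L) = integralGaloisSpan R K x) :
    ∃ T : Matrix (L ≃ₐ[K] L) (L ≃ₐ[K] L) (integralClosure R K),
      IsUnit T ∧ ∀ g h, (T g h : K) = Algebra.trace K L (g x * h x) := by
  have hmem (z : L) : z ∈ A ↔ z ∈ integralGaloisSpan R K x := by rw [← SetLike.mem_coe, hgen]
  have hA0 := Submodule.ne_bot_of_mul_self_eq_traceDual hA
  have hspan : ⊤ ≤ Submodule.span K (Set.range fun g : L ≃ₐ[K] L => g x) := by
    rw [← Submodule.span_coe_eq_top_of_ne_bot (K := K) hA0, Submodule.span_le, hgen]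
    exact integralGaloisSpan_subset_span x
  let b := basisOfTopLeSpanOfCardEqFinrank _ hspan
    (Fintype.card_eq_nat_card.trans (IsGalois.card_aut_eq_finrank K L))
  have hb : ⇑b = fun g : L ≃ₐ[K] L => g x := coe_basisOfTopLeSpanOfCardEqFinrank _ _ _
  obtain ⟨T, hT, hTB⟩ := LinearMap.BilinForm.exists_isUnit_lift_gram_of_selfDual
    (traceForm_nondegenerate K L) b (integralClosure R K) fun z => by
      simp only [b.repr_mem_iff_exists_sum, hb, Algebra.traceForm_apply]
      change z ∈ integralGaloisSpan R K x ↔ _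
      rw [← hmem, Submodule.mem_iff_forall_trace_mul_mem hA
        (Submodule.fg_of_coe_eq_integralGaloisSpan hgen) hA0]
      refine ⟨fun hz g => hz _ ((hmem _).2 (apply_mem_integralGaloisSpan x g)), fun hz a ha => ?_⟩
      obtain ⟨c, hc, rfl⟩ := (hmem a).1 ha
      simp only [Finset.mul_sum, mul_smul_comm, map_sum, map_smul, smul_eq_mul]
      exact Subalgebra.sum_mem _ fun g _ => Subalgebra.mul_mem _ (hc g) (hz g)
  exact ⟨T, hT, fun g h => by simp [hTB, hb]⟩

end GaloisOrbit

open scoped Classical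

theorem stmt_5_general (p : ℕ) [Fact p.Prime]
    (K : Type*) [Field K] [Algebra ℚ_[p] K] [FiniteDimensional ℚ_[p] K]
    [Algebra ℤ_[p] K] [IsScalarTower ℤ_[p] ℚ_[p] K]
    (L : Type*) [Field L] [Algebra K L] [FiniteDimensional K L] [IsGalois K L]
    [Algebra ℤ_[p] L] [IsScalarTower ℤ_[p] K L]
    (A : Submodule (integralClosure ℤ_[p] L) L)
    (hA : ∀ z : L, z ∈ A * A ↔
      ∀ y : L, y ∈ integralClosure ℤ_[p] L →
        Algebra.trace K L (z * y) ∈ integralClosure ℤ_[p] K)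
    (x : L)
    (hgen : (A : Set L) = {z : L | ∃ c : (L ≃ₐ[K] L) → K,
      (∀ g : L ≃ₐ[K] L, c g ∈ integralClosure ℤ_[p] K) ∧
      z = ∑ g : L ≃ₐ[K] L, c g • g x}) :
    (∃ u : (MonoidAlgebra (integralClosure ℤ_[p] K) (L ≃ₐ[K] L))ˣ,
      ∀ g : L ≃ₐ[K] L,
        (((u : MonoidAlgebra (integralClosure ℤ_[p] K) (L ≃ₐ[K] L)).coeff g : K)) =
          Algebra.trace K L (x * g x)) ∧
    ∃ v : (integralClosure ℤ_[p] K)ˣ,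
      ((v : integralClosure ℤ_[p] K) : K) =
        Matrix.det (Matrix.of fun g h : L ≃ₐ[K] L => Algebra.trace K L (g x * h x)) := by
  -- Making `L` a `ℚ_[p]`-algebra through `K` shows `O_L` is Dedekind with fraction field `L`.
  let : Algebra ℚ_[p] L := ((algebraMap K L).comp (algebraMap ℚ_[p] K)).toAlgebra
  have : IsScalarTower ℚ_[p] K L := .of_algebraMap_eq fun _ => rfl
  have : IsScalarTower ℤ_[p] ℚ_[p] L := .of_algebraMap_eq fun z => by
    rw [IsScalarTower.algebraMap_apply ℤ_[p] K L, IsScalarTower.algebraMap_apply ℤ_[p] ℚ_[p] K]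
    rfl
  have : FiniteDimensional ℚ_[p] L := Module.Finite.trans K L
  have := integralClosure.isDedekindDomain ℤ_[p] ℚ_[p] L
  have := integralClosure.isFractionRing_of_finite_extension (A := ℤ_[p]) ℚ_[p] L
  have : Algebra.IsAlgebraic ℤ_[p] L :=
    IsFractionRing.comap_isAlgebraic_iff (K := ℚ_[p]).mpr inferInstance
  have : FaithfulSMul ℤ_[p] K := .of_field_isFractionRing ℤ_[p] K ℚ_[p] K
  obtain ⟨T, hT, hTtr⟩ := exists_isUnit_lift_trace_mul_orbit hA hgen
  have hinv (u : L ≃ₐ[K] L) : T.submatrix (u * ·) (u * ·) = T := Matrix.ext fun g h =>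
    Subtype.ext <| by simp [hTtr, ← map_mul, Algebra.trace_eq_of_algEquiv]
  refine ⟨⟨(MonoidAlgebra.isUnit_ofMatrixRow hT hinv).unit, fun g => by simp [hTtr]⟩,
    ((Matrix.isUnit_iff_isUnit_det T).1 hT).unit, ?_⟩
  rw [IsUnit.unit_spec, ← Subalgebra.coe_val, AlgHom.map_det]
  congr 1
  ext
  simp [hTtr]

/-- Let `L/K` be a finite abelian (weakly ramified) extension of `p`-adic
fields of odd degree with Galois group `G`, and `A = A_{L/K}` the square root of the
inverse different (the fractional `O_L`-ideal with `A² = D_{L/K}^{-1}`, the trace dual of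
`O_L`). If `x ∈ A` generates `A` as an `O_K[G]`-module, then
`R(x) = Σ_{g∈G} Tr_{L/K}(x·g(x))·g` is a unit of `O_K[G]`, and
`det(Tr_{L/K}(g(x)·h(x)))_{g,h}` is a unit of `O_K`. -/
theorem stmt_5 (p : ℕ) [Fact p.Prime]
    (K : Type*) [Field K] [Algebra ℚ_[p] K] [FiniteDimensional ℚ_[p] K]
    [Algebra ℤ_[p] K] [IsScalarTower ℤ_[p] ℚ_[p] K]
    (L : Type*) [Field L] [Algebra K L] [FiniteDimensional K L] [IsGalois K L]
    [Algebra ℤ_[p] L] [IsScalarTower ℤ_[p] K L]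
    (hodd : Odd (Module.finrank K L))
    (hab : ∀ σ τ : L ≃ₐ[K] L, σ * τ = τ * σ)
    (A : Submodule (integralClosure ℤ_[p] L) L)
    (hA : ∀ z : L, z ∈ A * A ↔
      ∀ y : L, y ∈ integralClosure ℤ_[p] L →
        Algebra.trace K L (z * y) ∈ integralClosure ℤ_[p] K)
    (x : L) (hxA : x ∈ A)
    (hgen : (A : Set L) = {z : L | ∃ c : (L ≃ₐ[K] L) → K,
      (∀ g : L ≃ₐ[K] L, c g ∈ integralClosure ℤ_[p] K) ∧
      z = ∑ g : L ≃ₐ[K] L, c g • g x}) :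
    (∃ u : (MonoidAlgebra (integralClosure ℤ_[p] K) (L ≃ₐ[K] L))ˣ,
      ∀ g : L ≃ₐ[K] L,
        (((u : MonoidAlgebra (integralClosure ℤ_[p] K) (L ≃ₐ[K] L)).coeff g : K)) =
          Algebra.trace K L (x * g x)) ∧
    ∃ v : (integralClosure ℤ_[p] K)ˣ,
      ((v : integralClosure ℤ_[p] K) : K) =
        Matrix.det (Matrix.of fun g h : L ≃ₐ[K] L => Algebra.trace K L (g x * h x)) :=
  stmt_5_general p K L A hA x hgen
end

section
/- Let F₁/E and F₂/E be finite abelian Galois extensions of fields with F₁ ∩ F₂ = E, and let F = F₁F₂. For i = 1,2 let x_i ∈ F_i satisfy Tr_{F_i/E}(g(x_i)·h(x_i)) = δ_{g,h} for all g,h ∈ Gal(F_i/E). Then the product x₁x₂ satisfies Tr_{F/E}(σ(x₁x₂)·τ(x₁x₂)) = δ_{σ,τ} for all σ,τ ∈ Gal(F/E); i.e., x₁x₂ is a self-dual element of F/E. -/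
/-!
Restriction to `F₁` and `F₂` embeds `Gal(F/E)` into `Gal(F₁/E) × Gal(F₂/E)`, since `F = F₁F₂`,
and `σ(x₁x₂) τ(x₁x₂)` is the product of `σ(x₁) τ(x₁) ∈ F₁` and `σ(x₂) τ(x₂) ∈ F₂`. As `F₁` and
`F₂` are linearly disjoint, the trace of such a product is the product of the traces, i.e.
`δ_{σ|F₁, τ|F₁} · δ_{σ|F₂, τ|F₂} = δ_{σ, τ}`.
-/

open scoped Classical

namespace IntermediateField

variable {E F : Type*} [Field E] [Field F] [Algebra E F]

theorem restrictNormalHom_prod_injective {A B : IntermediateField E F} [Normal E A] [Normal E B]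
    (hsup : A ⊔ B = ⊤) :
    Function.Injective ((AlgEquiv.restrictNormalHom A : Gal(F/E) →* Gal(A/E)).prod
      (AlgEquiv.restrictNormalHom B)) := by
  rw [← MonoidHom.ker_eq_bot_iff, MonoidHom.ker_prod, restrictNormalHom_ker, restrictNormalHom_ker,
    ← fixingSubgroup_sup, hsup, fixingSubgroup_top]

/-- Compute the trace through `F/A/E`: `Tr_{F/A}` is `A`-linear and agrees with `Tr_{B/E}` on `B`
by linear disjointness. -/
theorem trace_mul_of_linearDisjoint [FiniteDimensional E F] {A B : IntermediateField E F}
    (hAB : A.LinearDisjoint B) (hsup : A ⊔ B = ⊤) (a : A) (b : B) :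
    Algebra.trace E F (a * b) = Algebra.trace E A a * Algebra.trace E B b := by
  have hab : (a : F) * b = a • algebraMap B F b := (Algebra.smul_def a _).symm
  rw [← Algebra.trace_trace (S := A), hab, map_smul, hAB.trace_algebraMap hsup, smul_eq_mul,
    mul_comm, ← Algebra.smul_def, map_smul, smul_eq_mul, mul_comm]

end IntermediateField

theorem stmt_7_general (E F : Type*) [Field E] [Field F] [Algebra E F] [FiniteDimensional E F]
    (F₁ F₂ : IntermediateField E F)
    [IsGalois E F₁] [IsGalois E F₂]
    (hinf : F₁ ⊓ F₂ = ⊥) (hsup : F₁ ⊔ F₂ = ⊤)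
    (x₁ : F₁) (x₂ : F₂)
    (hx₁ : ∀ g h : F₁ ≃ₐ[E] F₁,
      Algebra.trace E F₁ (g x₁ * h x₁) = if g = h then 1 else 0)
    (hx₂ : ∀ g h : F₂ ≃ₐ[E] F₂,
      Algebra.trace E F₂ (g x₂ * h x₂) = if g = h then 1 else 0) :
    ∀ σ τ : F ≃ₐ[E] F,
      Algebra.trace E F (σ ((x₁ : F) * (x₂ : F)) * τ ((x₁ : F) * (x₂ : F))) =
        if σ = τ then 1 else 0 := by
  intro σ τ
  have hsplit : σ ((x₁ : F) * x₂) * τ ((x₁ : F) * x₂) =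
      ((σ.restrictNormal F₁ x₁ * τ.restrictNormal F₁ x₁ : F₁) : F) *
        (σ.restrictNormal F₂ x₂ * τ.restrictNormal F₂ x₂ : F₂) := by
    simp only [map_mul, MulMemClass.coe_mul, AlgEquiv.restrictNormal_apply]
    ring
  rw [hsplit, IntermediateField.trace_mul_of_linearDisjoint
    (IntermediateField.LinearDisjoint.of_inf_eq_bot hinf) hsup, hx₁, hx₂,
    ite_zero_mul_ite_zero, mul_one]
  exact if_congr (Prod.ext_iff.symm.trans
    (IntermediateField.restrictNormalHom_prod_injective hsup).eq_iff) rfl rfl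

/-- If `F₁/E` and `F₂/E` are finite abelian Galois extensions inside `F`
with `F₁ ∩ F₂ = E` and `F = F₁F₂`, and `xᵢ ∈ Fᵢ` are self-dual elements
(`Tr(g xᵢ · h xᵢ) = δ_{g,h}`), then `x₁x₂` is a self-dual element of `F/E`. -/
theorem stmt_7 (E F : Type*) [Field E] [Field F] [Algebra E F] [FiniteDimensional E F]
    (F₁ F₂ : IntermediateField E F)
    [IsGalois E F₁] [IsGalois E F₂]
    (hab₁ : ∀ σ τ : F₁ ≃ₐ[E] F₁, σ * τ = τ * σ)
    (hab₂ : ∀ σ τ : F₂ ≃ₐ[E] F₂, σ * τ = τ * σ)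
    (hinf : F₁ ⊓ F₂ = ⊥) (hsup : F₁ ⊔ F₂ = ⊤)
    (x₁ : F₁) (x₂ : F₂)
    (hx₁ : ∀ g h : F₁ ≃ₐ[E] F₁,
      Algebra.trace E F₁ (g x₁ * h x₁) = if g = h then 1 else 0)
    (hx₂ : ∀ g h : F₂ ≃ₐ[E] F₂,
      Algebra.trace E F₂ (g x₂ * h x₂) = if g = h then 1 else 0) :
    ∀ σ τ : F ≃ₐ[E] F,
      Algebra.trace E F (σ ((x₁ : F) * (x₂ : F)) * τ ((x₁ : F) * (x₂ : F))) =
        if σ = τ then 1 else 0 :=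
  stmt_7_general E F F₁ F₂ hinf hsup x₁ x₂ hx₁ hx₂
end

section
/- Let p be a prime and q a power of p. An element η ∈ F_{q^{p^n}} is a normal basis generator of F_{q^{p^n}} over F_q if and only if Tr_{F_{q^{p^n}}/F_q}(η) ≠ 0. -/
/-!
Let the Frobenius `σ` generate the cyclic group `Gal(F/E)` of order `N = p ^ n` and let
`T = σ - 1`, an `E`-linear endomorphism of `F`. In characteristic `p` we have
`T ^ N = σ ^ N - 1 = 0` and `T ^ (N - 1) = (σ - 1) ^ (p ^ n - 1) = ∑ i < N, σ ^ i`, which is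
the trace. The conjugates of `η` span the same subspace as the vectors `T ^ i η`, and since
`T ^ N = 0` on the `N`-dimensional space `F`, these span `F` exactly when `T ^ (N - 1) η ≠ 0`.
-/

open Polynomial Submodule

namespace Module.End

variable {K V : Type*} [Field K] [AddCommGroup V] [Module K V]

theorem pow_apply_eq_zero_of_le {T : Module.End K V} {v : V} {m k : ℕ}
    (hv : (T ^ m) v = 0) (hmk : m ≤ k) : (T ^ k) v = 0 := by
  rw [← Nat.sub_add_cancel hmk, pow_add, Module.End.mul_apply, hv, map_zero]

theorem linearIndependent_pow_apply {T : Module.End K V} {v : V} {N : ℕ}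
    (hv : (T ^ N) v ≠ 0) (hT : (T ^ (N + 1)) v = 0) :
    LinearIndependent K fun i : Fin (N + 1) => (T ^ (i : ℕ)) v := by
  induction N generalizing v with
  | zero => simpa [linearIndependent_unique_iff] using hv
  | succ N ih =>
    have hTv : LinearIndependent K fun i : Fin (N + 1) => (T ^ (i : ℕ)) (T v) := by
      simp only [← Module.End.mul_apply, ← pow_succ] at hv hT ⊢
      exact ih hv hT
    have hcons : (fun i : Fin (N + 2) => (T ^ (i : ℕ)) v) =
        Fin.cons v fun i : Fin (N + 1) => (T ^ (i : ℕ)) (T v) := by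
      ext i
      refine Fin.cases ?_ (fun i => ?_) i
      · simp
      · simp [pow_succ]
    rw [hcons, linearIndependent_finCons]
    refine ⟨hTv, fun hmem => hv ?_⟩
    have hker : span K (Set.range fun i : Fin (N + 1) => (T ^ (i : ℕ)) (T v)) ≤
        LinearMap.ker (T ^ (N + 1)) := by
      rw [span_le]
      rintro _ ⟨i, rfl⟩
      simp only [SetLike.mem_coe, LinearMap.mem_ker, ← Module.End.mul_apply, ← pow_succ,
        ← pow_add]
      exact pow_apply_eq_zero_of_le hT (by omega)
    exact hker hmem

theorem span_range_pow_apply_eq_of_pow_apply_eq_zero {T : Module.End K V} {v : V} {m : ℕ}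
    (hv : (T ^ m) v = 0) :
    span K (Set.range fun i : ℕ => (T ^ i) v) =
      span K (Set.range fun i : Fin m => (T ^ (i : ℕ)) v) := by
  refine le_antisymm (span_le.2 ?_) (span_mono ?_)
  · rintro _ ⟨i, rfl⟩
    by_cases hi : i < m
    · exact subset_span ⟨⟨i, hi⟩, rfl⟩
    · show (T ^ i) v ∈ _
      rw [pow_apply_eq_zero_of_le hv (not_lt.1 hi)]
      exact zero_mem _
  · rintro _ ⟨i, rfl⟩
    exact ⟨i, rfl⟩

theorem span_range_pow_apply_eq_top_iff {T : Module.End K V} {N : ℕ} (hT : T ^ (N + 1) = 0)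
    (hdim : Module.finrank K V = N + 1) (v : V) :
    span K (Set.range fun i : ℕ => (T ^ i) v) = ⊤ ↔ (T ^ N) v ≠ 0 := by
  constructor
  · intro htop hv
    have hle := finrank_range_le_card (R := K) fun i : Fin N => (T ^ (i : ℕ)) v
    rw [Set.finrank, ← span_range_pow_apply_eq_of_pow_apply_eq_zero hv, htop, finrank_top,
      hdim, Fintype.card_fin] at hle
    omega
  · intro hv
    rw [span_range_pow_apply_eq_of_pow_apply_eq_zero (m := N + 1) (by rw [hT]; rfl)]
    exact (linearIndependent_pow_apply hv (by rw [hT]; rfl)).span_eq_top_of_card_eq_finrank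
      (by rw [Fintype.card_fin, hdim])

theorem aeval_apply_mem_span_range_pow_apply (f : Module.End K V) (v : V) (P : K[X]) :
    aeval f P v ∈ span K (Set.range fun i : ℕ => (f ^ i) v) := by
  rw [aeval_eq_sum_range, LinearMap.sum_apply]
  exact sum_mem fun i _ => smul_mem _ _ (subset_span ⟨i, rfl⟩)

theorem span_range_pow_aeval_apply_le (f : Module.End K V) (v : V) (P : K[X]) :
    span K (Set.range fun i : ℕ => (aeval f P ^ i) v) ≤
      span K (Set.range fun i : ℕ => (f ^ i) v) := by
  rw [span_le]
  rintro _ ⟨i, rfl⟩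
  show (aeval f P ^ i) v ∈ _
  rw [← map_pow]
  exact aeval_apply_mem_span_range_pow_apply f v _

theorem span_range_sub_one_pow_apply (f : Module.End K V) (v : V) :
    span K (Set.range fun i : ℕ => ((f - 1) ^ i) v) =
      span K (Set.range fun i : ℕ => (f ^ i) v) := by
  apply le_antisymm
  · have h := span_range_pow_aeval_apply_le f v (X - 1)
    rwa [map_sub, aeval_X, map_one] at h
  · have h := span_range_pow_aeval_apply_le (f - 1) v (X + 1)
    rwa [map_add, aeval_X, map_one, sub_add_cancel] at h

end Module.End

theorem Polynomial.X_sub_one_pow_char_pow_sub_one (R : Type*) [CommRing R] (p : ℕ) [Fact p.Prime]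
    [CharP R p] (n : ℕ) :
    (X - 1 : R[X]) ^ (p ^ n - 1) = ∑ i ∈ Finset.range (p ^ n), X ^ i := by
  apply (monic_X_sub_C (1 : R)).isRegular.left
  simp only [C_1]
  rw [← pow_succ', Nat.sub_add_cancel (Nat.one_le_pow _ _ (Fact.out : p.Prime).pos),
    sub_pow_char_pow, one_pow, mul_geom_sum]

theorem sub_one_pow_char_pow_sub_one {A : Type*} (R : Type*) [CommRing R] [Ring A] [Algebra R A]
    (p : ℕ) [Fact p.Prime] [CharP R p] (n : ℕ) (a : A) :
    (a - 1) ^ (p ^ n - 1) = ∑ i ∈ Finset.range (p ^ n), a ^ i := by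
  simpa using congrArg (aeval a) (X_sub_one_pow_char_pow_sub_one R p n)

section CyclicGalois

open Module Module.End

variable {E F : Type*} [Field E] [Field F] [Algebra E F] [FiniteDimensional E F] [IsGalois E F]

theorem algebraMap_trace_eq_sum_pow_apply {σ : F ≃ₐ[E] F}
    (hσ : Function.Bijective fun i : Fin (finrank E F) => σ ^ (i : ℕ)) (x : F) :
    algebraMap E F (Algebra.trace E F x) =
      ∑ i ∈ Finset.range (finrank E F), (σ.toLinearMap ^ i) x := by
  rw [trace_eq_sum_automorphisms, ← Fin.sum_univ_eq_sum_range,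
    ← (Equiv.ofBijective _ hσ).sum_comp]
  simp_rw [Equiv.ofBijective_apply, ← AlgEquiv.pow_toLinearMap, AlgEquiv.toLinearMap_apply]

theorem span_range_algEquiv_apply_eq_top_iff_trace_ne_zero (p n : ℕ) [Fact p.Prime] [CharP E p]
    (hdeg : finrank E F = p ^ n) {σ : F ≃ₐ[E] F}
    (hσ : Function.Bijective fun i : Fin (finrank E F) => σ ^ (i : ℕ)) (x : F) :
    span E (Set.range fun g : F ≃ₐ[E] F => g x) = ⊤ ↔ Algebra.trace E F x ≠ 0 := by
  set s := σ.toLinearMap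
  obtain ⟨N, hN⟩ : ∃ N, p ^ n = N + 1 :=
    Nat.exists_eq_add_one.2 (pow_pos (Fact.out : p.Prime).pos n)
  have : CharP (Module.End E F) p := charP_of_injective_algebraMap' E p
  have hs : s ^ p ^ n = 1 := by
    rw [← AlgEquiv.pow_toLinearMap, ← hdeg, ← IsGalois.card_aut_eq_finrank, pow_card_eq_one']
    rfl
  have hnil : (s - 1) ^ (N + 1) = 0 := by
    rw [← hN, sub_pow_char_pow_of_commute _ _ (Commute.one_right s), hs, one_pow, sub_self]
  have htrace : algebraMap E F (Algebra.trace E F x) = ((s - 1) ^ N) x := by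
    rw [algebraMap_trace_eq_sum_pow_apply hσ, hdeg, ← LinearMap.sum_apply,
      ← sub_one_pow_char_pow_sub_one E p n, hN, Nat.add_sub_cancel]
  have hrange : (Set.range fun g : F ≃ₐ[E] F => g x) = Set.range fun i : ℕ => (s ^ i) x := by
    have hsurj : Function.Surjective fun i : ℕ => σ ^ i := fun g =>
      let ⟨i, hi⟩ := hσ.2 g; ⟨i, hi⟩
    simp_rw [s, ← AlgEquiv.pow_toLinearMap, AlgEquiv.toLinearMap_apply]
    exact (hsurj.range_comp fun g => g x).symm
  rw [hrange, ← span_range_sub_one_pow_apply,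
    span_range_pow_apply_eq_top_iff hnil (hdeg.trans hN),
    ← htrace, ne_eq, ne_eq, FaithfulSMul.algebraMap_eq_zero_iff]

end CyclicGalois

/-- For the extension `F_{q^{p^n}}/F_q` of finite fields of characteristic `p`
and degree `p^n`, an element `η` is a normal basis generator (its Galois conjugates form a
basis) if and only if `Tr(η) ≠ 0`. -/
theorem stmt_8 (p n : ℕ) [Fact p.Prime]
    (E F : Type*) [Field E] [Field F] [Fintype E] [Fintype F]
    [Algebra E F] [IsGalois E F] [CharP E p]
    (hdeg : Module.finrank E F = p ^ n) (η : F) :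
    (LinearIndependent E (fun g : F ≃ₐ[E] F => g η) ∧
      Submodule.span E (Set.range fun g : F ≃ₐ[E] F => g η) = ⊤) ↔
    Algebra.trace E F η ≠ 0 := by
  have hcard : Fintype.card (F ≃ₐ[E] F) = Module.finrank E F :=
    Fintype.card_eq_nat_card.trans (IsGalois.card_aut_eq_finrank E F)
  rw [and_iff_right_of_imp fun h => linearIndependent_of_top_le_span_of_card_eq_finrank h.ge hcard]
  exact span_range_algEquiv_apply_eq_top_iff_trace_ne_zero p n hdeg
    (FiniteField.bijective_frobeniusAlgEquivOfAlgebraic_pow E F) η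
end

section
/- Let L/K be a finite abelian extension of fields with Galois group G and let H ≤ G be a subgroup. If x ∈ L satisfies Tr_{L/K}(x·g(x)) = δ_{1,g} for all g ∈ G, then the element y = Tr_{L/L^H}(x) = Σ_{h∈H} h(x) of the fixed field L^H satisfies Tr_{L^H/K}(y·g̃(y)) = δ_{1,g̃} for all g̃ ∈ G/H = Gal(L^H/K). -/
/-!
Write `F = L^H` and extend `τ ∈ Gal(F/K)` to some `g ∈ Gal(L/K)`, which is possible because `L/K`
is normal. Then `y = Tr_{L/F}(x)` and `τ y = g y ∈ F`, so `F`-linearity and transitivity of the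
trace give `Tr_{F/K}(y · τ y) = Tr_{L/K}(x · g y) = ∑_{h ∈ H} Tr_{L/K}(x · (g h)(x))`. By
self-duality of `x` this counts the `h ∈ H` with `g h = 1`, so it is `1` if `g ∈ H` and `0`
otherwise; and `g ∈ H = Gal(L/F)` exactly when `τ = 1`.
-/

open scoped Classical

theorem Algebra.trace_trace_mul {R S T : Type*} [CommRing R] [CommRing S] [CommRing T]
    [Algebra R S] [Algebra R T] [Algebra S T] [IsScalarTower R S T] [Module.Free R S]
    [Module.Finite R S] [Module.Free S T] [Module.Finite S T] (x : T) (y : S) :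
    Algebra.trace R S (Algebra.trace S T x * y) = Algebra.trace R T (x * algebraMap S T y) := by
  rw [← Algebra.trace_trace (S := S) (x * _), mul_comm x, ← Algebra.smul_def, LinearMap.map_smul,
    smul_eq_mul, mul_comm]

theorem Algebra.trace_mul_apply_sum_apply_eq_ite {R S : Type*} [CommRing R] [CommRing S]
    [Algebra R S] {x : S}
    (hx : ∀ g : S ≃ₐ[R] S, Algebra.trace R S (x * g x) = if g = 1 then 1 else 0)
    (G : Finset (S ≃ₐ[R] S)) (g : S ≃ₐ[R] S) :
    Algebra.trace R S (x * g (∑ h ∈ G, h x)) = if g⁻¹ ∈ G then 1 else 0 := by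
  simp_rw [map_sum, Finset.mul_sum, map_sum, ← AlgEquiv.mul_apply, hx, mul_eq_one_iff_eq_inv',
    Finset.sum_ite_eq']

namespace IntermediateField

variable {K L : Type*} [Field K] [Field L] [Algebra K L] [FiniteDimensional K L] [IsGalois K L]

theorem algebraMap_trace_fixedField (H : Subgroup (L ≃ₐ[K] L)) (w : L) :
    algebraMap (fixedField H) L (Algebra.trace (fixedField H) L w) =
      ∑ h : H, (h : L ≃ₐ[K] L) w := by
  rw [trace_eq_sum_automorphisms]
  exact Fintype.sum_equiv ((MulEquiv.subgroupCongr (fixingSubgroup_fixedField H)).symm.trans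
    (fixingSubgroupEquiv _)).toEquiv.symm _ _ fun _ => rfl

theorem liftNormal_mem_iff_eq_one (H : Subgroup (L ≃ₐ[K] L))
    (τ : fixedField H ≃ₐ[K] fixedField H) : τ.liftNormal L ∈ H ↔ τ = 1 := by
  have hH : τ.liftNormal L ∈ H ↔ τ.liftNormal L ∈ fixingSubgroup (fixedField H) := by
    rw [fixingSubgroup_fixedField]
  rw [hH, mem_fixingSubgroup_iff, AlgEquiv.ext_iff, Subtype.forall]
  refine forall₂_congr fun y hy => ?_
  rw [AlgEquiv.one_apply, ← Subtype.coe_inj]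
  exact Eq.congr_left (τ.liftNormal_commutes L ⟨y, hy⟩)

end IntermediateField

theorem stmt_13_general (K L : Type*) [Field K] [Field L] [Algebra K L]
    [FiniteDimensional K L] [IsGalois K L]
    (H : Subgroup (L ≃ₐ[K] L))
    (x : L)
    (hx : ∀ g : L ≃ₐ[K] L, Algebra.trace K L (x * g x) = if g = 1 then 1 else 0) :
    ∃ y : IntermediateField.fixedField H,
      (y : L) = ∑ h : H, (h : L ≃ₐ[K] L) x ∧
      ∀ τ : IntermediateField.fixedField H ≃ₐ[K] IntermediateField.fixedField H,
        Algebra.trace K (IntermediateField.fixedField H) (y * τ y) =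
          if τ = 1 then 1 else 0 := by
  have hy := IntermediateField.algebraMap_trace_fixedField H x
  refine ⟨Algebra.trace (IntermediateField.fixedField H) L x, hy, fun τ => ?_⟩
  have hsum : ∑ h : H, (h : L ≃ₐ[K] L) x = ∑ h ∈ (H : Set (L ≃ₐ[K] L)).toFinset, h x :=
    Finset.sum_set_coe (f := fun h : L ≃ₐ[K] L => h x) _
  rw [Algebra.trace_trace_mul, ← τ.liftNormal_commutes L, hy, hsum,
    Algebra.trace_mul_apply_sum_apply_eq_ite hx]
  simp only [Set.mem_toFinset, SetLike.mem_coe, inv_mem_iff,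
    IntermediateField.liftNormal_mem_iff_eq_one]

/-- Let `L/K` be a finite abelian Galois extension with group `G` and `H ≤ G`.
If `x ∈ L` satisfies `Tr_{L/K}(x·g(x)) = δ_{1,g}` for all `g ∈ G`, then
`y = Σ_{h∈H} h(x)`, an element of the fixed field `L^H`, satisfies
`Tr_{L^H/K}(y·τ(y)) = δ_{1,τ}` for all `τ ∈ Gal(L^H/K)`. -/
theorem stmt_13 (K L : Type*) [Field K] [Field L] [Algebra K L]
    [FiniteDimensional K L] [IsGalois K L]
    (hab : ∀ σ τ : L ≃ₐ[K] L, σ * τ = τ * σ)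
    (H : Subgroup (L ≃ₐ[K] L))
    (x : L)
    (hx : ∀ g : L ≃ₐ[K] L, Algebra.trace K L (x * g x) = if g = 1 then 1 else 0) :
    ∃ y : IntermediateField.fixedField H,
      (y : L) = ∑ h : H, (h : L ≃ₐ[K] L) x ∧
      ∀ τ : IntermediateField.fixedField H ≃ₐ[K] IntermediateField.fixedField H,
        Algebra.trace K (IntermediateField.fixedField H) (y * τ y) =
          if τ = 1 then 1 else 0 :=
  stmt_13_general K L H x hx
end

section
/- Let L₁/K and L₂/K be abelian extensions of a p-adic field K with L₁/K unramified, L₁ ∩ L₂ = K, and L = L₁L₂ of odd degree, both weakly ramified. If x₁ is a self-dual integral normal basis generator of A_{L₁/K} = O_{L₁} and x₂ of A_{L₂/K}, then x₁x₂ is a self-dual integral normal basis generator of A_{L/K}. -/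
/-!
Put `X = x₁x₂`. As `L₁` and `L₂` are linearly disjoint with compositum `L`, the trace of `L/K` on a
product `ab` (`a ∈ L₁`, `b ∈ L₂`) is `Tr_{L₁/K}(a) Tr_{L₂/K}(b)`, and `Gal(L/K)` embeds into
`Gal(L₁/K) × Gal(L₂/K)`; hence `(gX)_g` is a self-dual basis of `L/K`.

Each `gX` lies in `A`: the conjugates of `x₁` are integral, and a conjugate `w` of `x₂` satisfies
`w² ∈ A₂² = 𝒟⁻¹(L₂/K) ⊆ 𝒟⁻¹(L/K) = A²`, so `w ∈ A` because squaring is injective on fractional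
ideals of the Dedekind domain `𝒪_L`. (`A` is fractional since expanding in a self-dual basis
bounds the denominators of `𝒟⁻¹(L/K)`.) Finally a self-dual basis contained in `A` spans `A`
over `𝒪_K`: the coordinates `Tr(z · gX)` of `z ∈ A` lie in `Tr(A²) ⊆ 𝒪_K`.
-/

open scoped Classical

open nonZeroDivisors

namespace FractionalIdeal

variable {R F : Type*} [CommRing R] [Field F] [Algebra R F] [IsFractionRing R F]

theorem le_one_of_mul_self_le_one [IsIntegrallyClosed R] {I : FractionalIdeal R⁰ F}
    (h : I * I ≤ 1) : I ≤ 1 := by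
  intro x hx
  obtain ⟨r, hr⟩ := (mem_one_iff R⁰).mp (h (mul_mem_mul hx hx))
  have hsq : IsIntegral R (x ^ 2) := by
    rw [sq, ← hr]
    exact isIntegral_algebraMap
  exact (mem_one_iff R⁰).mpr (IsIntegrallyClosed.algebraMap_eq_of_integral (hsq.of_pow two_pos))

theorem le_of_mul_self_le_mul_self [IsDedekindDomain R] {I J : FractionalIdeal R⁰ F}
    (h : I * I ≤ J * J) : I ≤ J := by
  rcases eq_or_ne J 0 with rfl | hJ
  · rw [mul_zero, le_zero_iff, mul_self_eq_zero] at h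
    exact h.le
  have hIJ : I * J⁻¹ * (I * J⁻¹) ≤ 1 :=
    calc I * J⁻¹ * (I * J⁻¹) = I * I * (J⁻¹ * J⁻¹) := by ring
      _ ≤ J * J * (J⁻¹ * J⁻¹) := mul_le_mul_left h _
      _ = 1 := by rw [mul_mul_mul_comm, mul_inv_cancel₀ hJ, one_mul]
  calc I = I * J⁻¹ * J := by rw [mul_assoc, inv_mul_cancel₀ hJ, mul_one]
    _ ≤ 1 * J := mul_le_mul_left (le_one_of_mul_self_le_one hIJ) J
    _ = J := one_mul J

end FractionalIdeal

theorem Submodule.mem_of_mul_self_mem_mul_self {R F : Type*} [CommRing R] [IsDedekindDomain R]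
    [Field F] [Algebra R F] [IsFractionRing R F] {A : Submodule R F}
    (hA : IsFractional R⁰ A) {z : F} (hz : z * z ∈ A * A) : z ∈ A := by
  let I : FractionalIdeal R⁰ F := ⟨A, hA⟩
  refine FractionalIdeal.spanSingleton_le_iff_mem.mp
    (FractionalIdeal.le_of_mul_self_le_mul_self (J := I) ?_)
  rw [FractionalIdeal.spanSingleton_mul_spanSingleton, FractionalIdeal.spanSingleton_le_iff_mem,
    ← FractionalIdeal.mem_coe, FractionalIdeal.coe_mul]
  exact hz

theorem isFractional_of_smul_mul_self_le {R F S : Type*} [CommRing S] [Field F]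
    [Algebra S F] [IsFractionRing S F] [CommRing R] [Algebra R F] [FaithfulSMul R F]
    {A : Submodule S F} {e : R} (he : e ≠ 0) (hAe : ∀ z ∈ A * A, e • z ∈ (algebraMap S F).range) :
    IsFractional S⁰ A := by
  rcases eq_or_ne A ⊥ with rfl | hA0
  · exact FractionalIdeal.isFractional_of_le_one _ bot_le
  obtain ⟨a, ha, ha0⟩ := Submodule.exists_mem_ne_zero_of_ne_bot hA0
  have hea : e • a ≠ 0 := by
    rw [Algebra.smul_def]
    exact mul_ne_zero ((map_ne_zero_iff _ (FaithfulSMul.algebraMap_injective R F)).mpr he) ha0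
  refine FractionalIdeal.isFractional_of_le (J := FractionalIdeal.spanSingleton _ (e • a)⁻¹)
    fun b hb => (FractionalIdeal.mem_spanSingleton _).mpr ?_
  obtain ⟨s, hs⟩ := hAe _ (Submodule.mul_mem_mul ha hb)
  refine ⟨s, ?_⟩
  rw [Algebra.smul_def, hs, ← smul_mul_assoc, mul_comm, ← mul_assoc, inv_mul_cancel₀ hea, one_mul]

theorem isDedekindDomain_integralClosure_of_tower (R F K L : Type*) [CommRing R]
    [IsDedekindDomain R] [Field F] [Algebra R F] [IsFractionRing R F] [Field K] [Algebra F K]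
    [FiniteDimensional F K] [Algebra.IsSeparable F K] [Algebra R K] [IsScalarTower R F K]
    [Field L] [Algebra K L] [FiniteDimensional K L] [Algebra.IsSeparable K L] [Algebra R L]
    [IsScalarTower R K L] : IsDedekindDomain (integralClosure R L) := by
  let : Algebra F L := ((algebraMap K L).comp (algebraMap F K)).toAlgebra
  have : IsScalarTower F K L := .of_algebraMap_eq' rfl
  have : IsScalarTower R F L := .of_algebraMap_eq fun r => by
    rw [IsScalarTower.algebraMap_apply R K L, IsScalarTower.algebraMap_apply R F K]
    rfl
  have := FiniteDimensional.trans F K L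
  have := Algebra.IsSeparable.trans F K L
  exact integralClosure.isDedekindDomain R F L

namespace IntermediateField

theorem isScalarTower_of_isScalarTower (R : Type*) {K L : Type*} [CommRing R] [Field K]
    [Field L] [Algebra R K] [Algebra K L] [Algebra R L] [IsScalarTower R K L]
    (M : IntermediateField K L) [Algebra R M] [IsScalarTower R K M] : IsScalarTower R M L :=
  .of_algebraMap_eq fun r => by
    rw [IsScalarTower.algebraMap_apply R K L, IsScalarTower.algebraMap_apply R K M]
    rfl

variable {F E : Type*} [Field F] [Field E] [Algebra F E] {A B : IntermediateField F E}

theorem LinearDisjoint.trace_mul [FiniteDimensional F E] (h₁ : A.LinearDisjoint B)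
    (h₂ : A ⊔ B = ⊤) (a : A) (b : B) :
    Algebra.trace F E (a * b) = Algebra.trace F A a * Algebra.trace F B b := by
  have hab : (a * b : E) = a • algebraMap B E b := by
    rw [Algebra.smul_def]
    rfl
  rw [← Algebra.trace_trace (S := A), hab, map_smul, h₁.trace_algebraMap h₂, smul_eq_mul,
    mul_comm, ← Algebra.smul_def, map_smul, smul_eq_mul, mul_comm]

theorem eq_of_restrictNormalHom_eq [Normal F A] [Normal F B] (h : A ⊔ B = ⊤)
    {σ τ : E ≃ₐ[F] E} (hA : AlgEquiv.restrictNormalHom A σ = AlgEquiv.restrictNormalHom A τ)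
    (hB : AlgEquiv.restrictNormalHom B σ = AlgEquiv.restrictNormalHom B τ) : σ = τ := by
  have hfix {C : IntermediateField F E} [Normal F C]
      (hC : AlgEquiv.restrictNormalHom C σ = AlgEquiv.restrictNormalHom C τ) :
      τ⁻¹ * σ ∈ C.fixingSubgroup := fun ⟨x, hx⟩ => by
    have := congrArg (fun φ => (φ ⟨x, hx⟩ : E)) hC
    simp only [AlgEquiv.restrictNormalHom_apply] at this
    simp [AlgEquiv.mul_apply, this]
  have : τ⁻¹ * σ ∈ (⊤ : IntermediateField F E).fixingSubgroup := by
    rw [← h, fixingSubgroup_sup]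
    exact ⟨hfix hA, hfix hB⟩
  rw [fixingSubgroup_top, Subgroup.mem_bot, inv_mul_eq_one] at this
  exact this.symm

theorem LinearDisjoint.trace_apply_mul_apply_eq_ite [FiniteDimensional F E] [Normal F A] [Normal F B]
    (h₁ : A.LinearDisjoint B) (h₂ : A ⊔ B = ⊤) {x : A} {y : B}
    (hx : ∀ g h : A ≃ₐ[F] A, Algebra.trace F A (g x * h x) = if g = h then 1 else 0)
    (hy : ∀ g h : B ≃ₐ[F] B, Algebra.trace F B (g y * h y) = if g = h then 1 else 0)
    (g h : E ≃ₐ[F] E) :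
    Algebra.trace F E (g (x * y) * h (x * y)) = if g = h then 1 else 0 := by
  let rA := AlgEquiv.restrictNormalHom (F := F) (K₁ := E) A
  let rB := AlgEquiv.restrictNormalHom (F := F) (K₁ := E) B
  have hgh : g (x * y) * h (x * y) = ↑(rA g x * rA h x) * ↑(rB g y * rB h y) := by
    simp only [map_mul, IntermediateField.coe_mul, rA, rB, AlgEquiv.restrictNormalHom_apply]
    ring
  rw [hgh, h₁.trace_mul h₂, hx, hy, ite_zero_mul_ite_zero, one_mul]
  refine if_congr ⟨fun ⟨hA, hB⟩ => eq_of_restrictNormalHom_eq h₂ hA hB, ?_⟩ rfl rfl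
  rintro rfl
  exact ⟨rfl, rfl⟩

end IntermediateField

theorem mem_setOf_sum_smul {R K M ι : Type*} [CommRing R] [Field K] [Algebra R K]
    [AddCommMonoid M] [Module K M] [Fintype ι] [DecidableEq ι] (v : ι → M) (i : ι) :
    v i ∈ {z | ∃ c : ι → K, (∀ i, c i ∈ integralClosure R K) ∧ z = ∑ i, c i • v i} :=
  ⟨Pi.single i 1, fun j => by
    rcases eq_or_ne j i with rfl | hj
    · simp [one_mem]
    · simp [hj, zero_mem], by simp [Pi.single_apply]⟩

section SelfDualBasis

variable {K L ι : Type*} [Field K] [Field L] [Algebra K L] [DecidableEq ι] {v : ι → L}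

theorem linearIndependent_of_trace_mul_eq_ite
    (hv : ∀ i j, Algebra.trace K L (v i * v j) = if i = j then 1 else 0) :
    LinearIndependent K v := by
  rw [linearIndependent_iff']
  intro s c hsum j hj
  have := congrArg (fun z => Algebra.trace K L (z * v j)) hsum
  simpa [Finset.sum_mul, smul_mul_assoc, hv, hj] using this

theorem sum_trace_mul_smul_eq_self [Fintype ι] [FiniteDimensional K L]
    (hv : ∀ i j, Algebra.trace K L (v i * v j) = if i = j then 1 else 0)
    (hcard : Fintype.card ι = Module.finrank K L) (z : L) :
    ∑ i, Algebra.trace K L (z * v i) • v i = z := by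
  let b := basisOfLinearIndependentOfCardEqFinrank' v (linearIndependent_of_trace_mul_eq_ite hv)
    hcard
  have hb (i : ι) : b i = v i := by simp [b]
  have hrepr (i : ι) : Algebra.trace K L (z * v i) = b.repr z i := by
    conv_lhs => rw [← b.sum_repr z]
    simp [Finset.sum_mul, hb, hv]
  conv_rhs => rw [← b.sum_repr z]
  simp only [hrepr, hb]

end SelfDualBasis

/-- `𝒟⁻¹(L/K)`, with `𝒪_K` and `𝒪_L` taken to be the integral closures of `R`. -/
def inverseDifferent (R K L : Type*) [CommRing R] [Field K] [Field L] [Algebra R K]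
    [Algebra K L] [Algebra R L] : Set L :=
  {z | ∀ y ∈ integralClosure R L, Algebra.trace K L (z * y) ∈ integralClosure R K}

def IsSqrtInverseDifferent (R K L : Type*) [CommRing R] [Field K] [Field L] [Algebra R K]
    [Algebra K L] [Algebra R L] (A : Submodule (integralClosure R L) L) : Prop :=
  ∀ z, z ∈ A * A ↔ z ∈ inverseDifferent R K L

theorem algebraMap_mem_inverseDifferent {R K M L : Type*} [CommRing R] [Field K] [Field M]
    [Field L] [Algebra R K] [Algebra K M] [Algebra K L] [Algebra M L] [IsScalarTower K M L]
    [Algebra R M] [Algebra R L] [IsScalarTower R M L] [FiniteDimensional K M]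
    [FiniteDimensional M L] {z : M} (hz : z ∈ inverseDifferent R K M) :
    algebraMap M L z ∈ inverseDifferent R K L := by
  intro y hy
  rw [← Algebra.trace_trace (S := M), ← Algebra.smul_def, map_smul, smul_eq_mul]
  exact hz _ (Algebra.isIntegral_trace hy)

section InverseDifferent

variable {R K L ι : Type*} [CommRing R] [Field K] [Field L] [Algebra R K] [Algebra K L]
  [Algebra R L] [IsScalarTower R K L] [FiniteDimensional K L] [Fintype ι] [DecidableEq ι]
  {v : ι → L}

theorem exists_smul_mem_integralClosure_of_mem_inverseDifferent [IsDomain R]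
    [Algebra.IsAlgebraic R L]
    (hv : ∀ i j, Algebra.trace K L (v i * v j) = if i = j then 1 else 0)
    (hcard : Fintype.card ι = Module.finrank K L) :
    ∃ e : R, e ≠ 0 ∧ ∀ z ∈ inverseDifferent R K L, e • z ∈ integralClosure R L := by
  obtain ⟨d, hd, hdv⟩ := Algebra.IsAlgebraic.exists_integral_multiples R (Finset.univ.image v)
  have hdv' (i : ι) : d • v i ∈ integralClosure R L :=
    hdv _ (Finset.mem_image_of_mem v (Finset.mem_univ i))
  refine ⟨d * d, mul_ne_zero hd hd, fun z hz => ?_⟩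
  have hexp : (d * d) • z = ∑ i, algebraMap K L (Algebra.trace K L (z * d • v i)) * d • v i := by
    conv_lhs => rw [← sum_trace_mul_smul_eq_self hv hcard z]
    rw [Finset.smul_sum]
    refine Finset.sum_congr rfl fun i _ => ?_
    rw [mul_smul_comm d z (v i), LinearMap.map_smul_of_tower]
    simp only [Algebra.smul_def, map_mul, ← IsScalarTower.algebraMap_apply]
    ring
  rw [hexp]
  exact Subalgebra.sum_mem _ fun i _ =>
    mul_mem ((hz _ (hdv' i)).map (IsScalarTower.toAlgHom R K L)) (hdv' i)

namespace IsSqrtInverseDifferent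

variable {A : Submodule (integralClosure R L) L}

theorem isFractional [IsDomain R] [Algebra.IsAlgebraic R L] [FaithfulSMul R L]
    [IsFractionRing (integralClosure R L) L] (hA : IsSqrtInverseDifferent R K L A)
    (hv : ∀ i j, Algebra.trace K L (v i * v j) = if i = j then 1 else 0)
    (hcard : Fintype.card ι = Module.finrank K L) :
    IsFractional (integralClosure R L)⁰ A := by
  obtain ⟨e, he, hAe⟩ := exists_smul_mem_integralClosure_of_mem_inverseDifferent (R := R) hv hcard
  exact isFractional_of_smul_mul_self_le he fun z hz =>
    ⟨⟨_, hAe z ((hA z).mp hz)⟩, rfl⟩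

theorem coe_eq_setOf_sum_smul (hA : IsSqrtInverseDifferent R K L A)
    (hv : ∀ i j, Algebra.trace K L (v i * v j) = if i = j then 1 else 0)
    (hcard : Fintype.card ι = Module.finrank K L) (hvA : ∀ i, v i ∈ A) :
    (A : Set L) = {z | ∃ c : ι → K, (∀ i, c i ∈ integralClosure R K) ∧ z = ∑ i, c i • v i} := by
  ext z
  constructor
  · intro hz
    refine ⟨fun i => Algebra.trace K L (z * v i), fun i => ?_,
      (sum_trace_mul_smul_eq_self hv hcard z).symm⟩
    simpa using (hA _).mp (Submodule.mul_mem_mul hz (hvA i)) 1 (one_mem _)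
  · rintro ⟨c, hc, rfl⟩
    refine Submodule.sum_mem A fun i _ => ?_
    have hci : algebraMap K L (c i) ∈ integralClosure R L :=
      (hc i).map (IsScalarTower.toAlgHom R K L)
    simpa [Subalgebra.smul_def, Algebra.smul_def] using A.smul_mem ⟨_, hci⟩ (hvA i)

end IsSqrtInverseDifferent

end InverseDifferent

theorem IsSqrtInverseDifferent.algebraMap_mem {R K M L : Type*} [CommRing R] [Field K] [Field M]
    [Field L] [Algebra R K] [Algebra K M] [Algebra K L] [Algebra M L] [IsScalarTower K M L]
    [Algebra R M] [Algebra R L] [IsScalarTower R M L] [FiniteDimensional K M]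
    [FiniteDimensional M L] [IsDedekindDomain (integralClosure R L)]
    [IsFractionRing (integralClosure R L) L] {B : Submodule (integralClosure R M) M}
    (hB : IsSqrtInverseDifferent R K M B) {A : Submodule (integralClosure R L) L}
    (hA : IsSqrtInverseDifferent R K L A) (hAfr : IsFractional (integralClosure R L)⁰ A)
    {w : M} (hw : w ∈ B) : algebraMap M L w ∈ A := by
  refine Submodule.mem_of_mul_self_mem_mul_self hAfr ((hA _).mpr ?_)
  rw [← map_mul]
  exact algebraMap_mem_inverseDifferent ((hB _).mp (Submodule.mul_mem_mul hw hw))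

theorem stmt_18_general (p : ℕ) [Fact p.Prime]
    (K : Type*) [Field K] [Algebra ℚ_[p] K] [FiniteDimensional ℚ_[p] K]
    [Algebra ℤ_[p] K] [IsScalarTower ℤ_[p] ℚ_[p] K]
    (L : Type*) [Field L] [Algebra K L] [FiniteDimensional K L] [IsGalois K L]
    [Algebra ℤ_[p] L] [IsScalarTower ℤ_[p] K L]
    (L₁ L₂ : IntermediateField K L)
    [Algebra ℤ_[p] L₁] [IsScalarTower ℤ_[p] K L₁]
    [Algebra ℤ_[p] L₂] [IsScalarTower ℤ_[p] K L₂]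
    [IsGalois K L₁] [IsGalois K L₂]
    (hinf : L₁ ⊓ L₂ = ⊥) (hsup : L₁ ⊔ L₂ = ⊤)
    -- `x₁` is a self-dual integral normal basis generator of `O_{L₁}`
    (x₁ : L₁) (hx₁int : x₁ ∈ integralClosure ℤ_[p] L₁)
    (hx₁sd : ∀ g h : L₁ ≃ₐ[K] L₁,
      Algebra.trace K L₁ (g x₁ * h x₁) = if g = h then 1 else 0)
    -- `A₂ = A_{L₂/K}` and `x₂` a self-dual integral normal basis generator of it
    (A₂ : Submodule (integralClosure ℤ_[p] L₂) L₂)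
    (hA₂ : ∀ z : L₂, z ∈ A₂ * A₂ ↔
      ∀ y : L₂, y ∈ integralClosure ℤ_[p] L₂ →
        Algebra.trace K L₂ (z * y) ∈ integralClosure ℤ_[p] K)
    (x₂ : L₂)
    (hx₂gen : (A₂ : Set L₂) = {z : L₂ | ∃ c : (L₂ ≃ₐ[K] L₂) → K,
      (∀ g, c g ∈ integralClosure ℤ_[p] K) ∧ z = ∑ g : L₂ ≃ₐ[K] L₂, c g • g x₂})
    (hx₂sd : ∀ g h : L₂ ≃ₐ[K] L₂,
      Algebra.trace K L₂ (g x₂ * h x₂) = if g = h then 1 else 0)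
    -- `A = A_{L/K}`
    (A : Submodule (integralClosure ℤ_[p] L) L)
    (hA : ∀ z : L, z ∈ A * A ↔
      ∀ y : L, y ∈ integralClosure ℤ_[p] L →
        Algebra.trace K L (z * y) ∈ integralClosure ℤ_[p] K) :
    ((x₁ : L) * (x₂ : L)) ∈ A ∧
    (A : Set L) = {z : L | ∃ c : (L ≃ₐ[K] L) → K,
      (∀ g, c g ∈ integralClosure ℤ_[p] K) ∧
      z = ∑ g : L ≃ₐ[K] L, c g • g ((x₁ : L) * (x₂ : L))} ∧
    ∀ g h : L ≃ₐ[K] L,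
      Algebra.trace K L (g ((x₁ : L) * (x₂ : L)) * h ((x₁ : L) * (x₂ : L))) =
        if g = h then 1 else 0 := by
  have : Algebra.IsAlgebraic ℤ_[p] L :=
    have := IsLocalization.isAlgebraic ℚ_[p] ℤ_[p]⁰
    have := Algebra.IsAlgebraic.trans ℤ_[p] ℚ_[p] K
    .trans ℤ_[p] K L
  have : FaithfulSMul ℤ_[p] L :=
    have := FaithfulSMul.trans ℤ_[p] ℚ_[p] K
    .trans ℤ_[p] K L
  have := isDedekindDomain_integralClosure_of_tower ℤ_[p] ℚ_[p] K L
  have := integralClosure.isFractionRing_of_algebraic (A := ℤ_[p]) (L := L)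
    ((injective_iff_map_eq_zero _).mp (FaithfulSMul.algebraMap_injective ℤ_[p] L))
  have := IntermediateField.isScalarTower_of_isScalarTower ℤ_[p] L₂
  have hsd := (IntermediateField.LinearDisjoint.of_inf_eq_bot hinf).trace_apply_mul_apply_eq_ite hsup
    hx₁sd hx₂sd
  have hcard : Fintype.card (L ≃ₐ[K] L) = Module.finrank K L :=
    Fintype.card_eq_nat_card.trans (IsGalois.card_aut_eq_finrank K L)
  have hXA (g : L ≃ₐ[K] L) : g ((x₁ : L) * (x₂ : L)) ∈ A := by
    have hx₁g : IsIntegral ℤ_[p] (g x₁) :=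
      ((show IsIntegral ℤ_[p] x₁ from hx₁int).map L₁.val).map g
    have hx₂g : AlgEquiv.restrictNormalHom L₂ g x₂ ∈ A₂ := by
      rw [← SetLike.mem_coe, hx₂gen]
      exact mem_setOf_sum_smul _ _
    rw [map_mul, ← AlgEquiv.restrictNormalHom_apply L₂]
    exact A.smul_mem ⟨_, hx₁g⟩ (IsSqrtInverseDifferent.algebraMap_mem hA₂ hA
      (IsSqrtInverseDifferent.isFractional hA hsd hcard) hx₂g)
  exact ⟨by simpa using hXA 1, IsSqrtInverseDifferent.coe_eq_setOf_sum_smul hA hsd hcard hXA, hsd⟩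

/-- Let `L₁/K`, `L₂/K` be abelian extensions of a `p`-adic field `K` with
`L₁/K` unramified (encoded: the trace dual of `O_{L₁}` is `O_{L₁}`, i.e. `A_{L₁/K} = O_{L₁}`),
`L₁ ∩ L₂ = K`, and `L = L₁L₂` of odd degree. If `x₁` is a self-dual integral normal basis
generator of `A_{L₁/K} = O_{L₁}` and `x₂` one of `A_{L₂/K}` (the square root of the inverse
different of `L₂/K`), then `x₁x₂` is a self-dual integral normal basis generator of
`A_{L/K}`. -/
theorem stmt_18 (p : ℕ) [Fact p.Prime]
    (K : Type*) [Field K] [Algebra ℚ_[p] K] [FiniteDimensional ℚ_[p] K]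
    [Algebra ℤ_[p] K] [IsScalarTower ℤ_[p] ℚ_[p] K]
    (L : Type*) [Field L] [Algebra K L] [FiniteDimensional K L] [IsGalois K L]
    [Algebra ℤ_[p] L] [IsScalarTower ℤ_[p] K L]
    (hodd : Odd (Module.finrank K L))
    (hab : ∀ σ τ : L ≃ₐ[K] L, σ * τ = τ * σ)
    (L₁ L₂ : IntermediateField K L)
    [Algebra ℤ_[p] L₁] [IsScalarTower ℤ_[p] K L₁]
    [Algebra ℤ_[p] L₂] [IsScalarTower ℤ_[p] K L₂]
    [IsGalois K L₁] [IsGalois K L₂]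
    (hinf : L₁ ⊓ L₂ = ⊥) (hsup : L₁ ⊔ L₂ = ⊤)
    -- `L₁/K` is unramified: the inverse different of `L₁/K` is `O_{L₁}` itself
    (hunram : ∀ z : L₁,
      (∀ y : L₁, y ∈ integralClosure ℤ_[p] L₁ →
        Algebra.trace K L₁ (z * y) ∈ integralClosure ℤ_[p] K) ↔
      z ∈ integralClosure ℤ_[p] L₁)
    -- `x₁` is a self-dual integral normal basis generator of `O_{L₁}`
    (x₁ : L₁) (hx₁int : x₁ ∈ integralClosure ℤ_[p] L₁)
    (hx₁gen : ∀ z : L₁, z ∈ integralClosure ℤ_[p] L₁ ↔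
      ∃ c : (L₁ ≃ₐ[K] L₁) → K, (∀ g, c g ∈ integralClosure ℤ_[p] K) ∧
        z = ∑ g : L₁ ≃ₐ[K] L₁, c g • g x₁)
    (hx₁sd : ∀ g h : L₁ ≃ₐ[K] L₁,
      Algebra.trace K L₁ (g x₁ * h x₁) = if g = h then 1 else 0)
    -- `A₂ = A_{L₂/K}` and `x₂` a self-dual integral normal basis generator of it
    (A₂ : Submodule (integralClosure ℤ_[p] L₂) L₂)
    (hA₂ : ∀ z : L₂, z ∈ A₂ * A₂ ↔
      ∀ y : L₂, y ∈ integralClosure ℤ_[p] L₂ →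
        Algebra.trace K L₂ (z * y) ∈ integralClosure ℤ_[p] K)
    (x₂ : L₂) (hx₂A : x₂ ∈ A₂)
    (hx₂gen : (A₂ : Set L₂) = {z : L₂ | ∃ c : (L₂ ≃ₐ[K] L₂) → K,
      (∀ g, c g ∈ integralClosure ℤ_[p] K) ∧ z = ∑ g : L₂ ≃ₐ[K] L₂, c g • g x₂})
    (hx₂sd : ∀ g h : L₂ ≃ₐ[K] L₂,
      Algebra.trace K L₂ (g x₂ * h x₂) = if g = h then 1 else 0)
    -- `A = A_{L/K}`
    (A : Submodule (integralClosure ℤ_[p] L) L)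
    (hA : ∀ z : L, z ∈ A * A ↔
      ∀ y : L, y ∈ integralClosure ℤ_[p] L →
        Algebra.trace K L (z * y) ∈ integralClosure ℤ_[p] K) :
    ((x₁ : L) * (x₂ : L)) ∈ A ∧
    (A : Set L) = {z : L | ∃ c : (L ≃ₐ[K] L) → K,
      (∀ g, c g ∈ integralClosure ℤ_[p] K) ∧
      z = ∑ g : L ≃ₐ[K] L, c g • g ((x₁ : L) * (x₂ : L))} ∧
    ∀ g h : L ≃ₐ[K] L,
      Algebra.trace K L (g ((x₁ : L) * (x₂ : L)) * h ((x₁ : L) * (x₂ : L))) =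
        if g = h then 1 else 0 :=
  stmt_18_general p K L L₁ L₂ hinf hsup x₁ hx₁int hx₁sd A₂ hA₂ x₂ hx₂gen hx₂sd A hA
end
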